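/- If the decision version of MAX-CRN-Output (given a CRN and a target value t, does a flow with output ≥ t exist?) were solvable in polynomial time, then 3-partition restricted to instances with Σ s_i polynomial in m would be solvable in polynomial time; formally, the reduction mapping a 3-partition instance to its lattice CRN is correct: the 3-partition instance is a yes-instance iff the CRN admits a flow with output exactly s = Σ s_i. -/

import Mathlib

/-!
A partition `c` gives the flow that switches on exactly the nodes `(i, c i)`. Conversely, a row
with at most one on-switch emits at most `s i`, so total output `s` forces exactly one on-switch
per row, which defines `c`. The columns then consume `s` in total, at most `s/m` each, hence
exactly `s/m` each, and the bounds `s/(4m) < s i < s/(2m)` leave room for exactly three rows in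
every column.
-/

open Finset

theorem card_eq_three_of_sum_eq {ι K : Type*} [Field K] [LinearOrder K] [IsStrictOrderedRing K]
    {A : Finset ι} {x : ι → K} {t : K} (ht : 0 < t) (hsum : ∑ i ∈ A, x i = t)
    (hlow : ∀ i ∈ A, t / 4 < x i) (hhigh : ∀ i ∈ A, x i < t / 2) : #A = 3 := by
  have hA : A.Nonempty := nonempty_of_sum_ne_zero (hsum ▸ ht.ne')
  have hlt4 : (#A : K) * (t / 4) < t := by
    simpa [hsum] using sum_lt_sum_of_nonempty hA hlow
  have hgt2 : t < (#A : K) * (t / 2) := by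
    simpa [hsum] using sum_lt_sum_of_nonempty hA hhigh
  have h4 : (#A : K) < 4 := by nlinarith
  have h2 : (2 : K) < #A := by nlinarith
  have : #A < 4 := by exact_mod_cast h4
  have : 2 < #A := by exact_mod_cast h2
  omega

theorem eq_of_le_of_sum_eq_card_mul {κ : Type*} [Fintype κ] {T : κ → ℕ} {q : ℕ}
    (hle : ∀ j, T j ≤ q) (hsum : ∑ j, T j = Fintype.card κ * q) (j : κ) : T j = q := by
  rw [← smul_eq_mul, ← Finset.card_univ, ← sum_const] at hsum
  exact (sum_eq_sum_iff_of_le fun j _ => hle j).1 hsum j (mem_univ j)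

section Switches

variable {ι κ : Type*} [Fintype ι] [Fintype κ]

theorem sum_ite_le_of_subsingleton {σ : κ → Bool} (hσ : ∀ j k, σ j → σ k → j = k) (a : ℕ) :
    ∑ j, (if σ j then a else 0) ≤ a := by
  rw [← sum_filter, sum_const, smul_eq_mul]
  have : #(univ.filter fun j => σ j = true) ≤ 1 :=
    card_le_one.2 fun j hj k hk => hσ j k (mem_filter.1 hj).2 (mem_filter.1 hk).2
  nlinarith

theorem exists_eq_true_of_sum_ite_eq {σ : κ → Bool} {a : ℕ} (ha : 0 < a)
    (h : ∑ j, (if σ j then a else 0) = a) : ∃ j, σ j = true := by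
  by_contra! hσ
  simp [hσ] at h
  omega

theorem exists_eq_true_of_sum_sum_ite_eq {σ : ι → κ → Bool} {s : ι → ℕ} (hpos : ∀ i, 0 < s i)
    (hσ : ∀ i j k, σ i j → σ i k → j = k)
    (hout : ∑ i, ∑ j, (if σ i j then s i else 0) = ∑ i, s i) (i : ι) : ∃ j, σ i j = true := by
  have hrow := (sum_eq_sum_iff_of_le fun i _ => sum_ite_le_of_subsingleton (hσ i) (s i)).1 hout
  exact exists_eq_true_of_sum_ite_eq (hpos i) (hrow i (mem_univ i))

theorem sum_sum_filter_eq_sum_sum_ite (σ : ι → κ → Bool) (s : ι → ℕ) :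
    ∑ j, ∑ i ∈ univ.filter (fun i => σ i j = true), s i = ∑ i, ∑ j, (if σ i j then s i else 0) := by
  rw [sum_comm]
  simp only [sum_filter]

end Switches

/-- Correctness of the reduction from 3-partition to the
decision version of MAX-CRN-Output on the lattice CRN: the 3-partition
instance is a yes-instance (the indices `{1,…,3m}` partition into `m` triples
each summing to `s/m`, expressed by an assignment `c` of each index to its
column) iff the lattice CRN admits a valid flow with output exactly
`s = Σ_i s_i`.

A flow of the lattice CRN is described by its on/off assignment `σ`; validity
means at most one on-switch per row (each on-switch consumes the full row
influx `s i`) and the vertical consumption of each column is at most the top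
influx `s/m`; the output collected at `O` is `Σ_i Σ_j (if σ i j then s i else 0)`. -/
theorem lattice_reduction_correct
    (m : ℕ) (hm : 0 < m)
    (s : Fin (3 * m) → ℕ) (hpos : ∀ i, 0 < s i)
    (hdvd : m ∣ ∑ i, s i)
    (hbound : ∀ i, ((∑ k, s k : ℕ) : ℚ) / (4 * m) < (s i : ℚ)
      ∧ ((s i : ℕ) : ℚ) < ((∑ k, s k : ℕ) : ℚ) / (2 * m)) :
    (∃ c : Fin (3 * m) → Fin m, ∀ j,
        (Finset.univ.filter (fun i => c i = j)).card = 3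
        ∧ ∑ i ∈ Finset.univ.filter (fun i => c i = j), s i = (∑ i, s i) / m)
    ↔ (∃ σ : Fin (3 * m) → Fin m → Bool,
        (∀ i j k, σ i j = true → σ i k = true → j = k)
        ∧ (∀ j, ∑ i ∈ Finset.univ.filter (fun i => σ i j = true), s i
            ≤ (∑ i, s i) / m)
        ∧ (∑ i, ∑ j, (if σ i j then s i else 0)) = ∑ i, s i) := by
  constructor
  · rintro ⟨c, hc⟩
    refine ⟨fun i j => decide (c i = j), fun i j k hj hk => ?_, fun j => ?_, ?_⟩
    · exact (of_decide_eq_true hj).symm.trans (of_decide_eq_true hk)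
    · simp [(hc j).2]
    · simp
  · rintro ⟨σ, hσ, hcol, hout⟩
    choose c hc using exists_eq_true_of_sum_sum_ite_eq hpos hσ hout
    have hfilter (j : Fin m) :
        univ.filter (fun i => c i = j) = univ.filter (fun i => σ i j = true) := by
      ext i
      simpa using ⟨fun h => h ▸ hc i, hσ i (c i) j (hc i)⟩
    have hsum (j : Fin m) : ∑ i ∈ univ.filter (fun i => σ i j = true), s i = (∑ i, s i) / m :=
      eq_of_le_of_sum_eq_card_mul hcol
        (by rw [sum_sum_filter_eq_sum_sum_ite, hout, Fintype.card_fin, Nat.mul_div_cancel' hdvd]) j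
    refine ⟨c, fun j => ⟨?_, hfilter j ▸ hsum j⟩⟩
    have : Nonempty (Fin (3 * m)) := ⟨⟨0, by omega⟩⟩
    have hS : (0 : ℚ) < (∑ i, s i : ℕ) / m := by
      have : 0 < ∑ i, s i := sum_pos (fun i _ => hpos i) univ_nonempty
      positivity
    rw [hfilter]
    refine card_eq_three_of_sum_eq (x := fun i => (s i : ℚ)) hS ?_
      (fun i _ => ?_) (fun i _ => ?_)
    · rw [← Nat.cast_sum, hsum j, Nat.cast_div hdvd (by positivity)]
    · simpa [div_div, mul_comm] using (hbound i).1
    · simpa [div_div, mul_comm] using (hbound i).2
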